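/- arXiv:0809.0298 — 4 statements merged into one kernel-verified Lean document; each statement's English description precedes it below -/
import Mathlib

section
/- Let f and g be nonzero polynomials in ℂ[x,y]. Then Trop(f·g) = Trop(f) ∪ Trop(g). -/
open MvPolynomial

/-- The minimal weighted degree `m_{(u,v)}(f) = min { i*u + j*v : (i,j) ∈ supp(f) }`. -/
noncomputable def wdeg (u v : ℤ) (f : MvPolynomial (Fin 2) ℂ) : ℤ :=
  sInf ((fun a : Fin 2 →₀ ℕ => (a 0 : ℤ) * u + (a 1 : ℤ) * v) '' ↑f.support)

/-- The initial form `in_{(u,v)}(f)`: the sum of the terms of `f` whose exponent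
vector attains the minimal weighted degree. -/
noncomputable def initForm (u v : ℤ) (f : MvPolynomial (Fin 2) ℂ) :
    MvPolynomial (Fin 2) ℂ :=
  ∑ a ∈ f.support.filter (fun a => (a 0 : ℤ) * u + (a 1 : ℤ) * v = wdeg u v f),
    monomial a (f.coeff a)

/-- The tropicalization `Trop(f)`: nonzero integer vectors `(u,v)` such that the
initial form `in_{(u,v)}(f)` has at least two monomials. -/
def trop (f : MvPolynomial (Fin 2) ℂ) : Set (ℤ × ℤ) :=
  { uv | uv ≠ (0, 0) ∧ 2 ≤ (initForm uv.1 uv.2 f).support.card }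

/-! For a weight `w`, every product of a monomial of `f` and one of `g` has weight at least
`m_w(f) + m_w(g)`, with equality only for pairs of lowest-weight monomials. Hence
`in_w(f g) = in_w(f) in_w(g)`, which is nonzero over a domain. It remains to see that a product
`p q` of nonzero polynomials has a single monomial only if `p` and `q` do: if `p` has two
monomials, a coordinate weight separating them makes the lowest and the highest weight on the
support of `p q` differ. -/

open Finsupp (weight)

theorem Finsupp.weight_neg {σ R G : Type*} [Semiring R] [AddCommGroup G] [Module R G]
    (w : σ → G) (f : σ →₀ R) : weight (-w) f = -weight w f := by
  simp [weight_apply]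

namespace MvPolynomial

variable {σ R : Type*} [CommSemiring R]

theorem weightedHomogeneousComponent_mul_of_le {M : Type*} [AddCommMonoid M] [LinearOrder M]
    [IsOrderedCancelAddMonoid M] {w : σ → M} {f g : MvPolynomial σ R} {m n : M}
    (hf : ∀ d ∈ f.support, m ≤ weight w d) (hg : ∀ d ∈ g.support, n ≤ weight w d) :
    weightedHomogeneousComponent w (m + n) (f * g) =
      weightedHomogeneousComponent w m f * weightedHomogeneousComponent w n g := by
  classical
  ext d
  rw [coeff_weightedHomogeneousComponent]
  split_ifs with hd
  · rw [coeff_mul, coeff_mul]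
    refine Finset.sum_congr rfl fun x hx => ?_
    simp only [coeff_weightedHomogeneousComponent]
    by_cases h1 : x.1 ∈ f.support
    · by_cases h2 : x.2 ∈ g.support
      · have hsum : weight w x.1 + weight w x.2 = m + n := by
          rw [← map_add, Finset.HasAntidiagonal.mem_antidiagonal.mp hx, hd]
        obtain ⟨e1, e2⟩ := (add_eq_add_iff_eq_and_eq (hf _ h1) (hg _ h2)).mp hsum.symm
        rw [if_pos e1.symm, if_pos e2.symm]
      · simp [notMem_support_iff.mp h2]
    · simp [notMem_support_iff.mp h1]
  · exact (((weightedHomogeneousComponent_isWeightedHomogeneous m f).mul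
      (weightedHomogeneousComponent_isWeightedHomogeneous n g)).coeff_eq_zero d hd).symm

theorem card_support_mul_le_one {p q : MvPolynomial σ R}
    (hp : p.support.card ≤ 1) (hq : q.support.card ≤ 1) : (p * q).support.card ≤ 1 := by
  classical
  open Pointwise in
  calc (p * q).support.card ≤ (p.support + q.support).card := Finset.card_le_card (support_mul p q)
    _ ≤ p.support.card * q.support.card := Finset.card_add_le
    _ ≤ 1 := mul_le_one₀ hp (Nat.zero_le _) hq

noncomputable def minWeight (w : σ → ℤ) (f : MvPolynomial σ R) : ℤ :=
  sInf (weight w '' (f.support : Set (σ →₀ ℕ)))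

variable {w : σ → ℤ} {f g : MvPolynomial σ R}

theorem minWeight_le {d : σ →₀ ℕ} (hd : d ∈ f.support) : minWeight w f ≤ weight w d :=
  csInf_le (f.support.finite_toSet.image _).bddBelow ⟨d, hd, rfl⟩

theorem exists_weight_eq_minWeight (hf : f ≠ 0) : ∃ d ∈ f.support, weight w d = minWeight w f :=
  ((Finset.coe_nonempty.mpr (support_nonempty.mpr hf)).image _).csInf_mem
    (f.support.finite_toSet.image _)

theorem weightedHomogeneousComponent_minWeight_ne_zero (hf : f ≠ 0) :
    weightedHomogeneousComponent w (minWeight w f) f ≠ 0 := by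
  obtain ⟨d, hd, hdw⟩ := exists_weight_eq_minWeight (w := w) hf
  refine ne_of_apply_ne (coeff d) ?_
  rwa [coeff_weightedHomogeneousComponent, if_pos hdw, coeff_zero, ← mem_support_iff]

theorem add_minWeight_le_of_mem_support_mul {d : σ →₀ ℕ} (hd : d ∈ (f * g).support) :
    minWeight w f + minWeight w g ≤ weight w d := by
  classical
  obtain ⟨a, ha, b, hb, rfl⟩ := Finset.mem_add.mp (support_mul f g hd)
  rw [map_add]
  exact add_le_add (minWeight_le ha) (minWeight_le hb)

variable [NoZeroDivisors R]

theorem minWeight_mul (hf : f ≠ 0) (hg : g ≠ 0) :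
    minWeight w (f * g) = minWeight w f + minWeight w g := by
  have hprod := weightedHomogeneousComponent_mul_of_le (w := w) (f := f) (g := g)
    (fun _ => minWeight_le) (fun _ => minWeight_le)
  have hne : weightedHomogeneousComponent w (minWeight w f + minWeight w g) (f * g) ≠ 0 := by
    rw [hprod]
    exact mul_ne_zero (weightedHomogeneousComponent_minWeight_ne_zero hf)
      (weightedHomogeneousComponent_minWeight_ne_zero hg)
  obtain ⟨d, hd⟩ := support_nonempty.mpr hne
  rw [support_weightedHomogeneousComponent, Finset.mem_filter] at hd
  obtain ⟨c, hc, hcw⟩ := exists_weight_eq_minWeight (w := w) (mul_ne_zero hf hg)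
  exact le_antisymm (hd.2 ▸ minWeight_le hd.1) (hcw ▸ add_minWeight_le_of_mem_support_mul hc)

theorem weightedHomogeneousComponent_minWeight_mul (hf : f ≠ 0) (hg : g ≠ 0) :
    weightedHomogeneousComponent w (minWeight w (f * g)) (f * g) =
      weightedHomogeneousComponent w (minWeight w f) f *
        weightedHomogeneousComponent w (minWeight w g) g := by
  rw [minWeight_mul hf hg]
  exact weightedHomogeneousComponent_mul_of_le (fun _ => minWeight_le) (fun _ => minWeight_le)

theorem one_lt_card_support_mul_of_left {p q : MvPolynomial σ R}
    (hp : 1 < p.support.card) (hq : q ≠ 0) : 1 < (p * q).support.card := by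
  classical
  obtain ⟨a, ha, b, hb, hab⟩ := Finset.one_lt_card.mp hp
  obtain ⟨i, hi⟩ := Finsupp.ne_iff.mp hab
  wlog hlt : a i < b i generalizing a b
  · exact this b hb a ha hab.symm hi.symm (hi.symm.lt_of_le (not_lt.mp hlt))
  have hp0 : p ≠ 0 := by rintro rfl; simp at hp
  have hpq : p * q ≠ 0 := mul_ne_zero hp0 hq
  set w : σ → ℤ := Pi.single i 1
  have hw (d : σ →₀ ℕ) : weight w d = d i := by simp [w, Finsupp.weight_single_index]
  obtain ⟨e, he⟩ := support_nonempty.mpr hq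
  obtain ⟨c, hc, hcw⟩ := exists_weight_eq_minWeight (w := w) hpq
  obtain ⟨c', hc', hc'w⟩ := exists_weight_eq_minWeight (w := -w) hpq
  rw [minWeight_mul hp0 hq] at hcw hc'w
  have hlow := add_le_add (minWeight_le (w := w) ha) (minWeight_le (w := w) he)
  have hhigh := add_le_add (minWeight_le (w := -w) hb) (minWeight_le (w := -w) he)
  simp only [Finsupp.weight_neg, hw] at hcw hc'w hlow hhigh
  refine Finset.one_lt_card.mpr ⟨c, hc, c', hc', fun hcc' => ?_⟩
  subst hcc'
  omega

theorem one_lt_card_support_mul_iff {p q : MvPolynomial σ R} (hp : p ≠ 0) (hq : q ≠ 0) :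
    1 < (p * q).support.card ↔ 1 < p.support.card ∨ 1 < q.support.card := by
  refine ⟨fun h => ?_, ?_⟩
  · by_contra! hpq
    exact h.not_ge (card_support_mul_le_one hpq.1 hpq.2)
  · rintro (h | h)
    · exact one_lt_card_support_mul_of_left h hq
    · exact mul_comm p q ▸ one_lt_card_support_mul_of_left h hp

end MvPolynomial

theorem weight_fin_two (u v : ℤ) (a : Fin 2 →₀ ℕ) :
    weight ![u, v] a = (a 0 : ℤ) * u + (a 1 : ℤ) * v := by
  simp [Finsupp.weight_eq_sum, Fin.sum_univ_two]

theorem wdeg_eq_minWeight (u v : ℤ) (f : MvPolynomial (Fin 2) ℂ) :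
    wdeg u v f = minWeight ![u, v] f := by
  simp only [wdeg, minWeight, weight_fin_two]

theorem initForm_eq_weightedHomogeneousComponent (u v : ℤ) (f : MvPolynomial (Fin 2) ℂ) :
    initForm u v f = weightedHomogeneousComponent ![u, v] (minWeight ![u, v] f) f := by
  classical
  simp only [initForm, weightedHomogeneousComponent_apply, weight_fin_two, wdeg_eq_minWeight]

/-- The tropicalization of a product is the union of the tropicalizations. -/
theorem trop_mul (f g : MvPolynomial (Fin 2) ℂ) (hf : f ≠ 0) (hg : g ≠ 0) :
    trop (f * g) = trop f ∪ trop g := by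
  ext ⟨u, v⟩
  have key := one_lt_card_support_mul_iff
    (weightedHomogeneousComponent_minWeight_ne_zero (w := ![u, v]) hf)
    (weightedHomogeneousComponent_minWeight_ne_zero (w := ![u, v]) hg)
  rw [← weightedHomogeneousComponent_minWeight_mul hf hg] at key
  simp only [trop, Set.mem_ofPred_eq, Set.mem_union, initForm_eq_weightedHomogeneousComponent,
    ← and_or_left]
  exact and_congr_right' key
end

section
/- (Bernshteĭn's second theorem for two polynomials in two variables, as used in the paper.) Let f and g be nonzero polynomials in ℂ[x,y]. If Trop(f) ∩ Trop(g) = ∅, then the system f = g = 0 has no solutions at infinity: for every (u,v) ∈ ℤ² \ {(0,0)} there is no point (x,y) ∈ (ℂ*)² with in_{(u,v)}(f)(x,y) = 0 and in_{(u,v)}(g)(x,y) = 0. -/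
/-!
If `(u, v) ∉ Trop(f)` then, since `f ≠ 0` and the minimal weight is attained, `in_{(u,v)}(f)` is a
single nonzero term `c xⁱ yʲ`, which has no zero on the torus `(ℂ*)²`. Disjointness of the
tropicalizations puts every direction outside `Trop(f)` or outside `Trop(g)`.
-/

open MvPolynomial

namespace MvPolynomial

variable {σ R : Type*}

theorem exists_eq_monomial_of_card_support_le_one [CommSemiring R] {p : MvPolynomial σ R}
    (hp : p.support.card ≤ 1) : ∃ a b, p = monomial a b := by
  classical
  obtain ⟨a, ha⟩ := Finset.card_le_one_iff_subset_singleton.mp hp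
  refine ⟨a, coeff a p, ?_⟩
  ext b
  rw [coeff_monomial]
  split_ifs with hab
  · rw [hab]
  · exact notMem_support_iff.mp fun hb => hab (Finset.mem_singleton.mp (ha hb)).symm

theorem eval_ne_zero_of_card_support_le_one [CommSemiring R] [NoZeroDivisors R]
    {p : MvPolynomial σ R} (hp : p ≠ 0) (hcard : p.support.card ≤ 1) {x : σ → R}
    (hx : ∀ i, x i ≠ 0) : eval x p ≠ 0 := by
  obtain ⟨a, b, rfl⟩ := exists_eq_monomial_of_card_support_le_one hcard
  have hb : b ≠ 0 := by rintro rfl; simp at hp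
  have : Nontrivial R := ⟨⟨b, 0, hb⟩⟩
  rw [eval_monomial]
  exact mul_ne_zero hb (Finset.prod_ne_zero_iff.mpr fun i _ => pow_ne_zero _ (hx i))

end MvPolynomial

section InitialForm

variable (u v : ℤ) (f : MvPolynomial (Fin 2) ℂ)

theorem support_initForm :
    (initForm u v f).support =
      f.support.filter (fun a => (a 0 : ℤ) * u + (a 1 : ℤ) * v = wdeg u v f) := by
  ext b
  simp +contextual [initForm, coeff_sum, coeff_monomial]

theorem exists_mem_support_weight_eq_wdeg (hf : f ≠ 0) :
    ∃ a ∈ f.support, (a 0 : ℤ) * u + (a 1 : ℤ) * v = wdeg u v f := by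
  set weights := (fun a : Fin 2 →₀ ℕ => (a 0 : ℤ) * u + (a 1 : ℤ) * v) '' ↑f.support
  have hne : weights.Nonempty := (Finset.coe_nonempty.mpr (support_nonempty.mpr hf)).image _
  have hbdd : BddBelow weights := ((f.support.finite_toSet).image _).bddBelow
  exact Int.csInf_mem hne hbdd

theorem initForm_ne_zero (hf : f ≠ 0) : initForm u v f ≠ 0 := by
  obtain ⟨a, ha, hwa⟩ := exists_mem_support_weight_eq_wdeg u v f hf
  rw [← support_nonempty, support_initForm]
  exact ⟨a, Finset.mem_filter.mpr ⟨ha, hwa⟩⟩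

theorem eval_initForm_ne_zero_of_notMem_trop (hf : f ≠ 0) (huv : (u, v) ≠ (0, 0))
    (htrop : (u, v) ∉ trop f) {x y : ℂ} (hx : x ≠ 0) (hy : y ≠ 0) :
    eval ![x, y] (initForm u v f) ≠ 0 := by
  have hcard : (initForm u v f).support.card ≤ 1 := by
    by_contra h
    exact htrop ⟨huv, not_le.mp h⟩
  refine eval_ne_zero_of_card_support_le_one (initForm_ne_zero u v f hf) hcard ?_
  intro i
  fin_cases i <;> assumption

end InitialForm

/-- Bernshteĭn's second theorem for two polynomials in two variables:
if the tropicalizations are disjoint, then for no nonzero direction `(u,v)` do the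
initial forms of `f` and `g` have a common zero in the torus `(ℂ*)²`. -/
theorem no_solutions_at_infinity (f g : MvPolynomial (Fin 2) ℂ) (hf : f ≠ 0) (hg : g ≠ 0)
    (htrop : trop f ∩ trop g = ∅) :
    ∀ u v : ℤ, (u, v) ≠ (0, 0) → ∀ x y : ℂ, x ≠ 0 → y ≠ 0 →
      ¬ (eval ![x, y] (initForm u v f) = 0 ∧ eval ![x, y] (initForm u v g) = 0) := by
  intro u v huv x y hx hy ⟨hfxy, hgxy⟩
  have hout : (u, v) ∉ trop f ∨ (u, v) ∉ trop g := by
    rw [← not_and_or, ← Set.mem_inter_iff, htrop]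
    exact Set.notMem_empty _
  rcases hout with hnf | hng
  · exact eval_initForm_ne_zero_of_notMem_trop u v f hf huv hnf hx hy hfxy
  · exact eval_initForm_ne_zero_of_notMem_trop u v g hg huv hng hx hy hgxy
end

section
/- Let r be a polynomial in ℂ[x,y] whose support contains at least two points (i.e. r has at least two monomials with nonzero coefficients). Then r has a zero in the algebraic torus: there exists (x,y) ∈ ℂ² with x ≠ 0, y ≠ 0 and r(x,y) = 0. -/
open MvPolynomial

/-! The Kronecker substitution `x = t`, `y = t ^ M`, with `M` larger than every `x`-degree of `r`,
sends distinct monomials of `r` to distinct powers of `t`. The resulting one-variable polynomial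
therefore still has two nonzero coefficients, so it is not of the form `c * t ^ n` and, `ℂ` being
algebraically closed, has a nonzero root `t`; then `(t, t ^ M)` is a zero of `r` in the torus. -/

namespace Polynomial

open scoped Polynomial

theorem exists_ne_zero_isRoot_of_coeff_ne_zero {K : Type*} [Field K] [IsAlgClosed K]
    {q : K[X]} {k₁ k₂ : ℕ} (hk : k₁ ≠ k₂) (h₁ : q.coeff k₁ ≠ 0) (h₂ : q.coeff k₂ ≠ 0) :
    ∃ t : K, t ≠ 0 ∧ q.IsRoot t := by
  by_contra! hroots
  have hq : q ≠ 0 := fun h => h₁ (by simp [h])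
  have hzero : q.roots = Multiset.replicate q.natDegree 0 := by
    rw [← IsAlgClosed.card_roots_eq_natDegree]
    exact Multiset.eq_replicate_card.mpr fun t ht =>
      by_contra fun h => hroots t h ((mem_roots hq).mp ht)
  have hmonomial : q = C q.leadingCoeff * X ^ q.natDegree := by
    conv_lhs => rw [← C_leadingCoeff_mul_prod_multiset_X_sub_C
      (IsAlgClosed.card_roots_eq_natDegree (p := q)), hzero]
    simp
  rw [hmonomial, coeff_C_mul_X_pow] at h₁ h₂
  exact hk ((ite_ne_right_iff.mp h₁).1.trans (ite_ne_right_iff.mp h₂).1.symm)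

end Polynomial

def kroneckerIndex (M : ℕ) (m : Fin 2 →₀ ℕ) : ℕ := m 0 + M * m 1

lemma kroneckerIndex_mod {M : ℕ} {m : Fin 2 →₀ ℕ} (hm : m 0 < M) :
    kroneckerIndex M m % M = m 0 := by
  rw [kroneckerIndex, Nat.add_mul_mod_self_left, Nat.mod_eq_of_lt hm]

lemma kroneckerIndex_div {M : ℕ} {m : Fin 2 →₀ ℕ} (hm : m 0 < M) :
    kroneckerIndex M m / M = m 1 := by
  rw [kroneckerIndex, Nat.add_mul_div_left _ _ (by omega), Nat.div_eq_of_lt hm, zero_add]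

lemma kroneckerIndex_injOn (M : ℕ) : Set.InjOn (kroneckerIndex M) {m | m 0 < M} := by
  intro m₁ h₁ m₂ h₂ he
  ext i
  fin_cases i
  · simpa [kroneckerIndex_mod h₁, kroneckerIndex_mod h₂] using congrArg (· % M) he
  · simpa [kroneckerIndex_div h₁, kroneckerIndex_div h₂] using congrArg (· / M) he

lemma aeval_kronecker_eq_sum {R : Type*} [CommSemiring R] (M : ℕ) (r : MvPolynomial (Fin 2) R) :
    aeval ![Polynomial.X, Polynomial.X ^ M] r =
      ∑ m ∈ r.support, Polynomial.C (r.coeff m) * Polynomial.X ^ kroneckerIndex M m := by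
  conv_lhs => rw [r.as_sum, map_sum]
  refine Finset.sum_congr rfl fun m _ => ?_
  rw [aeval_monomial, Finsupp.prod_fintype _ _ (by simp), Fin.prod_univ_two]
  simp [kroneckerIndex, pow_add, pow_mul]

lemma coeff_aeval_kronecker {R : Type*} [CommSemiring R] {M : ℕ} {r : MvPolynomial (Fin 2) R}
    (hM : ∀ m ∈ r.support, m 0 < M) {m : Fin 2 →₀ ℕ} (hm : m 0 < M) :
    (aeval ![Polynomial.X, Polynomial.X ^ M] r).coeff (kroneckerIndex M m) = r.coeff m := by
  rw [aeval_kronecker_eq_sum, Polynomial.finsetSum_coeff, Finset.sum_eq_single m]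
  · simp
  · intro m' hm' hne
    rw [Polynomial.coeff_C_mul_X_pow,
      if_neg fun h => hne (kroneckerIndex_injOn M hm (hM m' hm') h).symm]
  · intro h
    simp [notMem_support_iff.mp h]

lemma eval_aeval_kronecker {R : Type*} [CommSemiring R] (M : ℕ) (r : MvPolynomial (Fin 2) R)
    (t : R) :
    (aeval ![Polynomial.X, Polynomial.X ^ M] r).eval t = eval ![t, t ^ M] r := by
  rw [← Polynomial.coe_aeval_eq_eval, ← AlgHom.comp_apply, comp_aeval]
  change _ = aeval ![t, t ^ M] r
  refine congrArg (aeval · r) (funext fun i => ?_)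
  fin_cases i <;> simp

/-- A polynomial in two variables with at least two monomials with nonzero
coefficients has a zero in the algebraic torus `(ℂ*)²`. -/
theorem exists_torus_zero (r : MvPolynomial (Fin 2) ℂ) (hcard : 2 ≤ r.support.card) :
    ∃ x y : ℂ, x ≠ 0 ∧ y ≠ 0 ∧ eval ![x, y] r = 0 := by
  obtain ⟨m₁, hm₁, m₂, hm₂, hne⟩ := Finset.one_lt_card.mp hcard
  set M := r.degreeOf 0 + 1
  have hM : ∀ m ∈ r.support, m 0 < M := fun m hm =>
    Nat.lt_succ_of_le (monomial_le_degreeOf 0 hm)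
  obtain ⟨t, ht, hroot⟩ := Polynomial.exists_ne_zero_isRoot_of_coeff_ne_zero
    (q := aeval ![Polynomial.X, Polynomial.X ^ M] r)
    (fun h => hne (kroneckerIndex_injOn M (hM m₁ hm₁) (hM m₂ hm₂) h))
    (by rwa [coeff_aeval_kronecker hM (hM m₁ hm₁), ← mem_support_iff])
    (by rwa [coeff_aeval_kronecker hM (hM m₂ hm₂), ← mem_support_iff])
  exact ⟨t, t ^ M, ht, pow_ne_zero M ht, by rw [← eval_aeval_kronecker]; exact hroot⟩
end

section
/- (Ostrowski; Newton polygon of a product.) Let f and g be nonzero polynomials in ℂ[x,y]. Then the Newton polygon of the product is the Minkowski sum of the Newton polygons: conv(supp(f·g)) = conv(supp(f)) + conv(supp(g)), where the convex hulls are taken in ℝ² and + denotes Minkowski sum of sets. -/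
/-!
If `x = a + b` is an extreme point of `conv (A + B)` with `a ∈ A`, `b ∈ B`, then `a + b` has no
other decomposition `a' + b'`: otherwise `x` would be the midpoint of `a + b'` and `a' + b`.
So the coefficient of the corresponding monomial of `f * g` is the product of two nonzero
coefficients. Hence every vertex of `conv (supp f + supp g)` lies in `supp (f * g)`, and since a
polytope is the convex hull of its vertices, `conv (supp (f * g)) ⊇ conv (supp f + supp g)`.
The reverse inclusion is `supp (f * g) ⊆ supp f + supp g`.
-/

open MvPolynomial Pointwise

/-- The support of a polynomial in two variables, regarded as a subset of `ℝ²`. -/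
def suppR (f : MvPolynomial (Fin 2) ℂ) : Set (Fin 2 → ℝ) :=
  (fun a : Fin 2 →₀ ℕ => fun i => (a i : ℝ)) '' ↑f.support

theorem uniqueAdd_of_add_mem_extremePoints {𝕜 E : Type*} [Field 𝕜] [LinearOrder 𝕜]
    [IsStrictOrderedRing 𝕜] [AddCommGroup E] [Module 𝕜 E] {A B : Finset E} {a b : E}
    (ha : a ∈ A) (hb : b ∈ B)
    (hab : a + b ∈ (convexHull 𝕜 (A + B : Set E)).extremePoints 𝕜) :
    UniqueAdd A B a b := by
  intro a' b' ha' hb' h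
  obtain rfl : b' = a + b - a' := eq_sub_of_add_eq' h
  have hmem : ∀ {p q}, p ∈ A → q ∈ B → p + q ∈ convexHull 𝕜 (A + B : Set E) :=
    fun hp hq ↦ subset_convexHull 𝕜 _ (Set.add_mem_add hp hq)
  have hmid : a + b ∈ openSegment 𝕜 (a + (a + b - a')) (a' + b) := by
    convert midpoint_mem_openSegment (𝕜 := 𝕜) (a + (a + b - a')) (a' + b) using 1
    rw [eq_comm, midpoint_eq_iff, AffineEquiv.pointReflection_apply, vsub_eq_sub, vadd_eq_add]
    abel
  obtain ⟨-, h'⟩ := (mem_extremePoints.1 hab).2 _ (hmem ha hb') _ (hmem ha' hb) hmid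
  obtain rfl : a' = a := add_right_cancel h'
  exact ⟨rfl, add_sub_cancel_left a' b⟩

section LocallyConvex

variable {E : Type*} [AddCommGroup E] [Module ℝ E] [TopologicalSpace E] [T2Space E]
  [IsTopologicalAddGroup E] [ContinuousSMul ℝ E] [LocallyConvexSpace ℝ E]

theorem Set.Finite.convexHull_extremePoints_convexHull {s : Set E} (hs : s.Finite) :
    convexHull ℝ ((convexHull ℝ s).extremePoints ℝ) = convexHull ℝ s := by
  have hext : ((convexHull ℝ s).extremePoints ℝ).Finite :=
    hs.subset extremePoints_convexHull_subset
  rw [← (hext.isCompact_convexHull (𝕜 := ℝ)).isClosed.closure_eq]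
  exact closure_convexHull_extremePoints (hs.isCompact_convexHull (𝕜 := ℝ))
    (convex_convexHull ℝ s)

theorem AddMonoidAlgebra.convexHull_image_support_mul {R A : Type*} [Semiring R]
    [NoZeroDivisors R] [AddCommMonoid A] (φ : A →+ E) (hφ : Function.Injective φ)
    (f g : AddMonoidAlgebra R A) :
    convexHull ℝ (φ '' (f * g).coeff.support) =
      convexHull ℝ (φ '' f.coeff.support) + convexHull ℝ (φ '' g.coeff.support) := by
  classical
  rw [← convexHull_add, ← Set.image_add φ, ← Finset.coe_add]
  have hfin : (φ '' ↑(f.coeff.support + g.coeff.support)).Finite := Set.toFinite _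
  refine (convexHull_mono (Set.image_mono (support_coeff_mul_subset f g))).antisymm ?_
  rw [← hfin.convexHull_extremePoints_convexHull]
  refine convexHull_mono fun x hx ↦ ?_
  obtain ⟨c, hc, rfl⟩ := extremePoints_convexHull_subset hx
  obtain ⟨a, ha, b, hb, rfl⟩ := Finset.mem_add.1 hc
  have huniq : UniqueAdd f.coeff.support g.coeff.support a b := by
    rw [← UniqueAdd.addHom_image_iff φ.toAddHom hφ]
    refine uniqueAdd_of_add_mem_extremePoints (𝕜 := ℝ) (Finset.mem_image_of_mem _ ha)
      (Finset.mem_image_of_mem _ hb) ?_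
    rwa [Finset.coe_image, Finset.coe_image, ← Set.image_add, ← Finset.coe_add, ← map_add]
  refine ⟨a + b, ?_, rfl⟩
  rw [Finset.mem_coe, Finsupp.mem_support_iff, coeff_mul_add_of_uniqueAdd huniq]
  exact mul_ne_zero (Finsupp.mem_support_iff.1 ha) (Finsupp.mem_support_iff.1 hb)

end LocallyConvex

def MvPolynomial.exponentVector (σ : Type*) : (σ →₀ ℕ) →+ (σ → ℝ) where
  toFun a i := a i
  map_zero' := by ext; simp
  map_add' _ _ := by ext; simp

theorem MvPolynomial.exponentVector_injective (σ : Type*) :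
    Function.Injective (exponentVector σ) :=
  fun _ _ h ↦ Finsupp.ext fun i ↦ Nat.cast_injective (congrFun h i)

theorem newton_polygon_mul_general (f g : MvPolynomial (Fin 2) ℂ) :
    convexHull ℝ (suppR (f * g)) = convexHull ℝ (suppR f) + convexHull ℝ (suppR g) :=
  AddMonoidAlgebra.convexHull_image_support_mul (exponentVector (Fin 2))
    (exponentVector_injective (Fin 2)) f g

/-- Ostrowski: the Newton polygon of a product is the Minkowski sum of the
Newton polygons. -/
theorem newton_polygon_mul (f g : MvPolynomial (Fin 2) ℂ) (hf : f ≠ 0) (hg : g ≠ 0) :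
    convexHull ℝ (suppR (f * g)) = convexHull ℝ (suppR f) + convexHull ℝ (suppR g) :=
  newton_polygon_mul_general f g
end
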